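/- (1 − e^{−2t})^{n−1} ≤ U_n(t) ≤ 1 for all integers n ≥ 1 and all real t ≥ 0; in particular U₂(t) = 1 − e^{−2t}. -/
import Mathlib

noncomputable section

/-- Normalized Fourier coefficients of the solution of the complex Burgers equation
with monochromatic data: U₁ = 1 and
U_n(t) = ∫₀ᵗ e^{−n(n−1)(t−s)}·n·Σ_{k=1}^{n−1} U_k(s) U_{n−k}(s) ds for n ≥ 2. -/
def burgersU : ℕ → ℝ → ℝ
  | 0 => fun _ => 0
  | 1 => fun _ => 1
  | n+2 => fun t =>
      ∫ s in (0:ℝ)..t,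
        Real.exp (-(((n:ℝ)+2) * ((n:ℝ)+1)) * (t - s)) * (((n:ℝ)+2) *
          ∑ k ∈ (Finset.Ico 1 (n+2)).attach,
            burgersU k.1 s * burgersU ((n+2) - k.1) s)
  termination_by n => n
  decreasing_by
  · have := k.2; simp only [Finset.mem_Ico] at this; omega
  · have := k.2; simp only [Finset.mem_Ico] at this; omega

lemma burgersU_rec (n : ℕ) (t : ℝ) :
    burgersU (n+2) t =
      ∫ s in (0:ℝ)..t,
        Real.exp (-(((n:ℝ)+2) * ((n:ℝ)+1)) * (t - s)) * (((n:ℝ)+2) *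
          ∑ k ∈ (Finset.Ico 1 (n+2)).attach,
            burgersU k.1 s * burgersU ((n+2) - k.1) s) := by
  rw [burgersU]

lemma burgersU_cont (n : ℕ) : Continuous (burgersU n) := by
  induction n using Nat.strong_induction_on with
  | _ n ih =>
    match n with
    | 0 =>
      rw [show burgersU 0 = fun _ => (0:ℝ) from funext fun t => by rw [burgersU]]
      exact continuous_const
    | 1 =>
      rw [show burgersU 1 = fun _ => (1:ℝ) from funext fun t => by rw [burgersU]]
      exact continuous_const
    | n+2 =>
      set M : ℝ := ((n:ℝ)+2) * ((n:ℝ)+1) with hM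
      have hg : Continuous (fun s : ℝ => Real.exp (M * s) * (((n:ℝ)+2) *
          ∑ k ∈ (Finset.Ico 1 (n+2)).attach,
            burgersU k.1 s * burgersU ((n+2) - k.1) s)) := by
        apply Continuous.mul
        · exact Real.continuous_exp.comp (continuous_const.mul continuous_id)
        · apply continuous_const.mul
          apply continuous_finset_sum
          intro k _
          have hk := k.2
          simp only [Finset.mem_Ico] at hk
          exact (ih k.1 (by omega)).mul (ih ((n+2) - k.1) (by omega))
      have key : ∀ t : ℝ, burgersU (n+2) t =
          Real.exp (-(M * t)) * ∫ s in (0:ℝ)..t, Real.exp (M * s) * (((n:ℝ)+2) *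
            ∑ k ∈ (Finset.Ico 1 (n+2)).attach,
              burgersU k.1 s * burgersU ((n+2) - k.1) s) := by
        intro t
        rw [burgersU_rec, ← intervalIntegral.integral_const_mul]
        apply intervalIntegral.integral_congr
        intro s _
        dsimp only
        conv_rhs => rw [← mul_assoc, ← Real.exp_add]
        rw [mul_assoc]
        congr 2
        ring
      have : Continuous fun t : ℝ => Real.exp (-(M * t)) *
          ∫ s in (0:ℝ)..t, Real.exp (M * s) * (((n:ℝ)+2) *
            ∑ k ∈ (Finset.Ico 1 (n+2)).attach,
              burgersU k.1 s * burgersU ((n+2) - k.1) s) :=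
        (Real.continuous_exp.comp (continuous_const.mul continuous_id).neg).mul
          (intervalIntegral.continuous_primitive (fun a b => hg.intervalIntegrable a b) 0)
      exact continuous_congr (fun t => (key t).symm) |>.mp this

lemma burgersU_one (t : ℝ) : burgersU 1 t = 1 := by rw [burgersU]
lemma hasDeriv_exp (M t s : ℝ) :
    HasDerivAt (fun s : ℝ => Real.exp (M * s - M * t)) (M * Real.exp (M * s - M * t)) s := by
  have h1 : HasDerivAt (fun s : ℝ => M * s - M * t) M s := by
    simpa using ((hasDerivAt_id s).const_mul M).sub_const (M * t)
  exact (h1.exp).congr_deriv (by ring)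

lemma hasDeriv_base (s : ℝ) :
    HasDerivAt (fun s : ℝ => 1 - Real.exp (-2*s)) (2 * Real.exp (-2*s)) s := by
  have ha : HasDerivAt (fun s : ℝ => (-2:ℝ)*s) (-2) s := by
    simpa using (hasDerivAt_id s).const_mul (-2:ℝ)
  have := (ha.exp).const_sub 1
  exact this.congr_deriv (by ring)

lemma hasDeriv_h (M t : ℝ) (m : ℕ) (s : ℝ) :
    HasDerivAt (fun s : ℝ => Real.exp (M * s - M * t) * (1 - Real.exp (-2*s))^(m+1))
      (M * Real.exp (M * s - M * t) * (1 - Real.exp (-2*s))^(m+1) +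
        Real.exp (M * s - M * t) *
          ((((m:ℝ)+1) * (1 - Real.exp (-2*s))^m) * (2 * Real.exp (-2*s)))) s := by
  have h3 : HasDerivAt (fun s : ℝ => (1 - Real.exp (-2*s))^(m+1))
      ((((m:ℝ)+1) * (1 - Real.exp (-2*s))^m) * (2 * Real.exp (-2*s))) s := by
    have := (hasDeriv_base s).pow (m+1)
    simp only [Nat.add_sub_cancel] at this
    exact this.congr_deriv (by push_cast; ring)
  exact ((hasDeriv_exp M t s).mul h3).congr_deriv (by ring)

lemma cont_exp (M t : ℝ) : Continuous (fun s : ℝ => Real.exp (M * s - M * t)) :=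
  Real.continuous_exp.comp ((continuous_const.mul continuous_id).sub continuous_const)

lemma cont_base : Continuous (fun s : ℝ => 1 - Real.exp (-2*s)) :=
  continuous_const.sub (Real.continuous_exp.comp (continuous_const.mul continuous_id))

lemma burgersU_bounds : ∀ n : ℕ, ∀ t : ℝ, 0 ≤ t →
    (1 - Real.exp (-2*t))^n ≤ burgersU (n+1) t ∧ burgersU (n+1) t ≤ 1 := by
  intro n
  induction n using Nat.strong_induction_on with
  | _ n ih =>
    match n with
    | 0 =>
      intro t ht
      simp [burgersU_one]
    | m+1 =>
      intro t ht
      set M : ℝ := ((m:ℝ)+2) * ((m:ℝ)+1) with hM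
      have hMpos : (0:ℝ) < M := by positivity
      have hexple : ∀ s : ℝ, 0 ≤ s → Real.exp (-2*s) ≤ 1 := by
        intro s hs
        rw [Real.exp_le_one_iff]
        nlinarith
      have hterm : ∀ s : ℝ, 0 ≤ s → ∀ k ∈ Finset.Ico 1 (m+2),
          (1 - Real.exp (-2*s))^m ≤ burgersU k s * burgersU ((m+2) - k) s ∧
          burgersU k s * burgersU ((m+2) - k) s ≤ 1 := by
        intro s hs k hk
        simp only [Finset.mem_Ico] at hk
        obtain ⟨a, rfl⟩ : ∃ a, k = a + 1 := ⟨k - 1, by omega⟩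
        have hb : (m+2) - (a+1) = (m - a) + 1 := by omega
        have h1 := ih a (by omega) s hs
        have h2 := ih (m - a) (by omega) s hs
        rw [hb]
        have hx : 0 ≤ 1 - Real.exp (-2*s) := by linarith [hexple s hs]
        constructor
        · calc (1 - Real.exp (-2*s))^m
              = (1 - Real.exp (-2*s))^a * (1 - Real.exp (-2*s))^(m - a) := by
                rw [← pow_add]; congr 1; omega
          _ ≤ burgersU (a+1) s * burgersU ((m-a)+1) s :=
              mul_le_mul h1.1 h2.1 (by positivity) (le_trans (by positivity) h1.1)
        · calc burgersU (a+1) s * burgersU ((m-a)+1) s ≤ 1 * 1 :=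
              mul_le_mul h1.2 h2.2 (le_trans (by positivity) h2.1)
                (le_trans (le_trans (by positivity) h1.1) h1.2)
          _ = 1 := one_mul 1
      have hsum : ∀ s : ℝ, 0 ≤ s →
          ((m:ℝ)+1) * (1 - Real.exp (-2*s))^m ≤
            (∑ k ∈ (Finset.Ico 1 (m+2)).attach, burgersU k.1 s * burgersU ((m+2) - k.1) s) ∧
          (∑ k ∈ (Finset.Ico 1 (m+2)).attach, burgersU k.1 s * burgersU ((m+2) - k.1) s) ≤
            (m:ℝ)+1 := by
        intro s hs
        have hcard : ((Finset.Ico 1 (m+2)).attach).card = m + 1 := by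
          rw [Finset.card_attach, Nat.card_Ico]
          omega
        constructor
        · have := Finset.sum_le_sum (s := (Finset.Ico 1 (m+2)).attach)
            (f := fun _ => (1 - Real.exp (-2*s))^m)
            (g := fun k => burgersU k.1 s * burgersU ((m+2) - k.1) s)
            (fun k _ => (hterm s hs k.1 k.2).1)
          rw [Finset.sum_const, hcard, nsmul_eq_mul] at this
          push_cast at this ⊢
          linarith
        · have := Finset.sum_le_sum (s := (Finset.Ico 1 (m+2)).attach)
            (g := fun _ => (1:ℝ))
            (f := fun k => burgersU k.1 s * burgersU ((m+2) - k.1) s)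
            (fun k _ => (hterm s hs k.1 k.2).2)
          rw [Finset.sum_const, hcard, nsmul_eq_mul, mul_one] at this
          push_cast at this ⊢
          linarith
      have hintg : Continuous (fun s : ℝ =>
          Real.exp (-M * (t - s)) * (((m:ℝ)+2) *
            ∑ k ∈ (Finset.Ico 1 (m+2)).attach, burgersU k.1 s * burgersU ((m+2) - k.1) s)) := by
        apply Continuous.mul
        · exact Real.continuous_exp.comp
            (continuous_const.mul (continuous_const.sub continuous_id))
        · apply continuous_const.mul
          apply continuous_finset_sum
          intro k _
          exact (burgersU_cont k.1).mul (burgersU_cont ((m+2) - k.1))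
      have hEq : ∀ s : ℝ, Real.exp (-M * (t - s)) = Real.exp (M * s - M * t) := by
        intro s; congr 1; ring
      have hrec : burgersU (m+2) t = ∫ s in (0:ℝ)..t,
          Real.exp (-M * (t - s)) * (((m:ℝ)+2) *
            ∑ k ∈ (Finset.Ico 1 (m+2)).attach, burgersU k.1 s * burgersU ((m+2) - k.1) s) := by
        rw [burgersU_rec]
      have hupper : burgersU (m+2) t ≤ 1 := by
        have hF : ∀ s ∈ Set.uIcc (0:ℝ) t,
            HasDerivAt (fun s : ℝ => Real.exp (M * s - M * t)) (M * Real.exp (M * s - M * t)) s :=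
          fun s _ => hasDeriv_exp M t s
        have hFcont : Continuous (fun s : ℝ => M * Real.exp (M * s - M * t)) :=
          continuous_const.mul (cont_exp M t)
        have hint : (∫ s in (0:ℝ)..t, M * Real.exp (M * s - M * t)) =
            1 - Real.exp (-(M * t)) := by
          rw [intervalIntegral.integral_eq_sub_of_hasDerivAt hF
            (hFcont.intervalIntegrable 0 t)]
          simp
        have hmono : (∫ s in (0:ℝ)..t,
            Real.exp (-M * (t - s)) * (((m:ℝ)+2) *
              ∑ k ∈ (Finset.Ico 1 (m+2)).attach, burgersU k.1 s * burgersU ((m+2) - k.1) s)) ≤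
            ∫ s in (0:ℝ)..t, M * Real.exp (M * s - M * t) := by
          apply intervalIntegral.integral_mono_on ht (hintg.intervalIntegrable 0 t)
            (hFcont.intervalIntegrable 0 t)
          intro s hs
          rw [hEq s]
          have hexppos : 0 < Real.exp (M * s - M * t) := Real.exp_pos _
          have h2 := (hsum s hs.1).2
          calc Real.exp (M * s - M * t) * (((m:ℝ)+2) *
                ∑ k ∈ (Finset.Ico 1 (m+2)).attach, burgersU k.1 s * burgersU ((m+2) - k.1) s)
              ≤ Real.exp (M * s - M * t) * (((m:ℝ)+2) * ((m:ℝ)+1)) := by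
                apply mul_le_mul_of_nonneg_left _ hexppos.le
                exact mul_le_mul_of_nonneg_left h2 (by positivity)
          _ = M * Real.exp (M * s - M * t) := by rw [hM]; ring
        rw [hrec]
        refine le_trans (le_of_le_of_eq hmono hint) ?_
        have := Real.exp_pos (-(M * t))
        linarith
      have hlower : (1 - Real.exp (-2*t))^(m+1) ≤ burgersU (m+2) t := by
        set h' : ℝ → ℝ := fun s =>
          M * Real.exp (M * s - M * t) * (1 - Real.exp (-2*s))^(m+1) +
          Real.exp (M * s - M * t) *
            ((((m:ℝ)+1) * (1 - Real.exp (-2*s))^m) * (2 * Real.exp (-2*s))) with hh'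
        have hcont' : Continuous h' := by
          rw [hh']
          apply Continuous.add
          · exact (continuous_const.mul (cont_exp M t)).mul (cont_base.pow (m+1))
          · exact (cont_exp M t).mul ((continuous_const.mul (cont_base.pow m)).mul
              (continuous_const.mul
                (Real.continuous_exp.comp (continuous_const.mul continuous_id))))
        have hint : (∫ s in (0:ℝ)..t, h' s) = (1 - Real.exp (-2*t))^(m+1) := by
          rw [intervalIntegral.integral_eq_sub_of_hasDerivAt
            (f := fun s : ℝ => Real.exp (M * s - M * t) * (1 - Real.exp (-2*s))^(m+1))
            (fun s _ => hasDeriv_h M t m s) (hcont'.intervalIntegrable 0 t)]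
          norm_num
        have hmono : (∫ s in (0:ℝ)..t, h' s) ≤
            ∫ s in (0:ℝ)..t,
              Real.exp (-M * (t - s)) * (((m:ℝ)+2) *
                ∑ k ∈ (Finset.Ico 1 (m+2)).attach, burgersU k.1 s * burgersU ((m+2) - k.1) s) := by
          apply intervalIntegral.integral_mono_on ht (hcont'.intervalIntegrable 0 t)
            (hintg.intervalIntegrable 0 t)
          intro s hs
          rw [hEq s]
          have hexppos : 0 < Real.exp (M * s - M * t) := Real.exp_pos _
          have hx : 0 ≤ 1 - Real.exp (-2*s) := by linarith [hexple s hs.1]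
          have hxe : 0 < Real.exp (-2*s) := Real.exp_pos _
          have h2 := (hsum s hs.1).1
          have hp : (0:ℝ) ≤ (1 - Real.exp (-2*s))^m := by positivity
          have step1 : h' s ≤ Real.exp (M * s - M * t) *
              (((m:ℝ)+2) * (((m:ℝ)+1) * (1 - Real.exp (-2*s))^m)) := by
            rw [hh']
            simp only
            rw [pow_succ, hM]
            nlinarith [mul_nonneg (mul_nonneg (mul_nonneg
              (show (0:ℝ) ≤ (m:ℝ)*((m:ℝ)+1) by positivity) hexppos.le) hp) hxe.le]
          refine le_trans step1 ?_
          exact mul_le_mul_of_nonneg_left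
            (mul_le_mul_of_nonneg_left h2 (by positivity)) hexppos.le
        rw [hrec]
        exact le_trans (le_of_eq hint.symm) hmono
      exact ⟨hlower, hupper⟩
lemma burgersU_two (t : ℝ) : burgersU 2 t = 1 - Real.exp (-2*t) := by
  have h0 : burgersU 2 t = ∫ s in (0:ℝ)..t, 2 * Real.exp (2 * s - 2 * t) := by
    rw [show (2:ℕ) = 0 + 2 from rfl, burgersU_rec]
    apply intervalIntegral.integral_congr
    intro s _
    dsimp only
    rw [Finset.sum_attach (Finset.Ico 1 2) (fun k => burgersU k s * burgersU (2 - k) s)]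
    rw [show Finset.Ico 1 2 = {1} from rfl, Finset.sum_singleton]
    norm_num [burgersU_one]
    rw [mul_comm]
    congr 1
    ring_nf
  rw [h0, intervalIntegral.integral_eq_sub_of_hasDerivAt
    (f := fun s : ℝ => Real.exp (2 * s - 2 * t)) (fun s _ => hasDeriv_exp 2 t s)
    ((continuous_const.mul (cont_exp 2 t)).intervalIntegrable 0 t)]
  norm_num

/-- (1 − e^{−2t})^{n−1} ≤ U_n(t) ≤ 1 for n ≥ 1, t ≥ 0; in particular
U₂(t) = 1 − e^{−2t}. -/
theorem stmt11 :
    (∀ (n : ℕ) (t : ℝ), 1 ≤ n → 0 ≤ t →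
      (1 - Real.exp (-2*t))^(n-1) ≤ burgersU n t ∧ burgersU n t ≤ 1) ∧
    (∀ t : ℝ, 0 ≤ t → burgersU 2 t = 1 - Real.exp (-2*t)) := by
  constructor
  · intro n t hn ht
    obtain ⟨m, rfl⟩ : ∃ m, n = m + 1 := ⟨n - 1, by omega⟩
    simpa using burgersU_bounds m t ht
  · intro t _
    exact burgersU_two t

end
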